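/- arXiv:2307.14315 — 5 statements merged into one kernel-verified Lean document; each statement's English description precedes it below -/
import Mathlib

section
/- Let f : (Z/2)^n → B be a function to an arbitrary type, and suppose there is a subgroup S ≤ (Z/2)^n such that for all x,y: f(x) = f(y) if and only if x ⊕ y ∈ S. Decompose (Z/2)^n as (Z/2)^{n-t} × (Z/2)^t and define S_l = {s_l ∈ (Z/2)^{n-t} | ∃ s_r ∈ (Z/2)^t, (s_l, s_r) ∈ S} (the image of S under the projection to the first n−t coordinates). Then for all u, v ∈ (Z/2)^{n-t}: the multisets G(u) = {f(u,w) | w ∈ (Z/2)^t} and G(v) = {f(v,w) | w ∈ (Z/2)^t} are equal if and only if u ⊕ v ∈ S_l. -/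
/-!
If `f` is constant exactly on the cosets of `S`, then `f (u, w) = f (v, w')` iff
`(u - v, w - w') ∈ S`. Hence an element `(u - v, b) ∈ S` makes the translation `w ↦ w - b`
carry each fibre of row `u` onto the same fibre of row `v`; conversely, if the fibres of the
value `f (u, 0)` have the same size in both rows, some `f (v, w)` equals `f (u, 0)`, and then
`(u - v, -w) ∈ S`. Over `ZMod 2` subtraction is addition.
-/

open Finset

section RowFibres

variable {G H B : Type*} [AddCommGroup G] [AddCommGroup H] [Fintype H] [DecidableEq B]
  (f : G × H → B) (S : AddSubgroup (G × H))

theorem card_rowFibre_eq_of_mem (hf : ∀ x y, x - y ∈ S → f x = f y) {u v : G} {b : H}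
    (hb : (u - v, b) ∈ S) (z : B) :
    #{w | f (u, w) = z} = #{w | f (v, w) = z} := by
  refine card_equiv (Equiv.subRight b) fun w => ?_
  have hrow : f (u, w) = f (v, w - b) := hf _ _ (by simpa using hb)
  simp [hrow]

theorem exists_mem_of_card_rowFibre_eq (hf : ∀ x y, f x = f y → x - y ∈ S) {u v : G}
    (hcard : ∀ z, #{w | f (u, w) = z} = #{w | f (v, w) = z}) :
    ∃ b : H, (u - v, b) ∈ S := by
  have hpos : 0 < #{w | f (v, w) = f (u, 0)} := by
    rw [← hcard]
    exact card_pos.mpr ⟨0, by simp⟩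
  obtain ⟨w, hw⟩ := card_pos.mp hpos
  refine ⟨-w, ?_⟩
  simpa using hf _ _ (mem_filter.mp hw).2.symm

theorem card_rowFibre_eq_iff (hf : ∀ x y, f x = f y ↔ x - y ∈ S) (u v : G) :
    (∀ z, #{w | f (u, w) = z} = #{w | f (v, w) = z}) ↔ ∃ b : H, (u - v, b) ∈ S :=
  ⟨exists_mem_of_card_rowFibre_eq f S fun x y => (hf x y).mp,
    fun ⟨_, hb⟩ => card_rowFibre_eq_of_mem f S (fun x y => (hf x y).mpr) hb⟩

end RowFibres

/-- Theorem 1 of the paper: for `f` hidden by a subgroup `S` of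
`(ZMod 2)^{n-t} × (ZMod 2)^t`, the multisets `G(u)` and `G(v)` of row
values agree iff `u ⊕ v` lies in the projection `S_l` of `S` onto the
first factor. Multiset equality is expressed by equality of counts of
every value `z`. -/
theorem stmt7 {a t : ℕ} {B : Type*} [DecidableEq B]
    (f : (Fin a → ZMod 2) × (Fin t → ZMod 2) → B)
    (S : AddSubgroup ((Fin a → ZMod 2) × (Fin t → ZMod 2)))
    (hf : ∀ x y, f x = f y ↔ x + y ∈ S) :
    ∀ u v : Fin a → ZMod 2,
      (∀ z : B,
          (Finset.univ.filter fun w : Fin t → ZMod 2 => f (u, w) = z).card =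
          (Finset.univ.filter fun w : Fin t → ZMod 2 => f (v, w) = z).card)
        ↔ ∃ b : Fin t → ZMod 2, (u + v, b) ∈ S := by
  intro u v
  rw [← ZModModule.sub_eq_add]
  exact card_rowFibre_eq_iff f S (fun x y => by rw [ZModModule.sub_eq_add]; exact hf x y) u v
end

section
/- Let f : (Z/2)^n → B satisfy f(x) = f(y) ⟺ x ⊕ y ∈ S for a subgroup S ≤ (Z/2)^n. With the decomposition (Z/2)^n = (Z/2)^{n-t} × (Z/2)^t and S_l the projection of S to the first factor, if u ⊕ v ∈ S_l then for every value z, the number of w ∈ (Z/2)^t with f(u,w) = z equals the number of w with f(v,w) = z. -/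
/-! Translating by an element `(c, b)` of the hiding subgroup does not change `f`, so
`w ↦ w + b` maps the `z`-fibre of `f (x, ·)` bijectively onto that of `f (x + c, ·)`.
Over `ZMod 2`, `v = u + (u + v)`, so this applies with `c = u + v`. -/

/-- `x + x ∈ S` because `f x = f x`. -/
theorem apply_add_of_mem_of_hides {G B : Type*} [AddCommGroup G] {f : G → B}
    {S : AddSubgroup G} (hf : ∀ x y, f x = f y ↔ x + y ∈ S) {s : G} (hs : s ∈ S)
    (x : G) : f (x + s) = f x :=
  (hf _ _).mpr <| by
    rw [add_right_comm]
    exact add_mem ((hf x x).mp rfl) hs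

theorem card_filter_eq_of_apply_eq_apply_add {T B : Type*} [AddGroup T] [Fintype T]
    [DecidableEq B] {g h : T → B} {b : T} (hgh : ∀ w, g w = h (w + b)) (z : B) :
    (Finset.univ.filter fun w => g w = z).card = (Finset.univ.filter fun w => h w = z).card :=
  Finset.card_equiv (Equiv.addRight b) fun w => by simp [hgh]

theorem card_filter_slice_eq_of_mem_of_hides {A T B : Type*} [AddCommGroup A] [AddCommGroup T]
    [Fintype T] [DecidableEq B] {f : A × T → B} {S : AddSubgroup (A × T)}
    (hf : ∀ x y, f x = f y ↔ x + y ∈ S) {c : A} {b : T} (hcb : (c, b) ∈ S) (x : A) (z : B) :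
    (Finset.univ.filter fun w => f (x, w) = z).card =
      (Finset.univ.filter fun w => f (x + c, w) = z).card :=
  card_filter_eq_of_apply_eq_apply_add
    (fun w => (apply_add_of_mem_of_hides hf hcb (x, w)).symm) z

/-- Direction (⟸) of Theorem 1: if `u ⊕ v ∈ S_l` (the projection of the
hiding subgroup `S` onto the first factor), then for every value `z` the
number of `w` with `f(u,w) = z` equals the number of `w` with `f(v,w) = z`. -/
theorem stmt8 {a t : ℕ} {B : Type*} [DecidableEq B]
    (f : (Fin a → ZMod 2) × (Fin t → ZMod 2) → B)
    (S : AddSubgroup ((Fin a → ZMod 2) × (Fin t → ZMod 2)))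
    (hf : ∀ x y, f x = f y ↔ x + y ∈ S)
    (u v : Fin a → ZMod 2)
    (huv : ∃ b : Fin t → ZMod 2, (u + v, b) ∈ S) :
    ∀ z : B,
      (Finset.univ.filter fun w : Fin t → ZMod 2 => f (u, w) = z).card =
      (Finset.univ.filter fun w : Fin t → ZMod 2 => f (v, w) = z).card := by
  obtain ⟨b, hb⟩ := huv
  intro z
  have hv : u + (u + v) = v := by rw [← add_assoc, ZModModule.add_self, zero_add]
  rw [card_filter_slice_eq_of_mem_of_hides hf hb u z, hv]
end

section
/- Let f : (Z/2)^n → B satisfy f(x) = f(y) ⟺ x ⊕ y ∈ S for a subgroup S. With (Z/2)^n = (Z/2)^{n-t} × (Z/2)^t and S_l the projection of S, if the multisets {f(u,w) : w ∈ (Z/2)^t} and {f(v,w) : w ∈ (Z/2)^t} coincide, then u ⊕ v ∈ S_l. -/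
open Finset

theorem exists_apply_eq_of_card_fiber_eq {W B : Type*} [Fintype W] [DecidableEq B]
    {g h : W → B} (hgh : ∀ z, #(univ.filter fun w => g w = z) = #(univ.filter fun w => h w = z))
    (w : W) : ∃ w', h w' = g w := by
  have hpos : 0 < #(univ.filter fun w' => h w' = g w) :=
    hgh (g w) ▸ card_pos.mpr ⟨w, by simp⟩
  obtain ⟨w', hw'⟩ := card_pos.mp hpos
  exact ⟨w', (mem_filter.mp hw').2⟩

/-- Direction (⟹) of Theorem 1: if the multisets of row values
`{f(u,w) : w}` and `{f(v,w) : w}` coincide (equal counts for every value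
`z`), then `u ⊕ v` lies in the projection `S_l` of `S`. -/
theorem stmt9 {a t : ℕ} {B : Type*} [DecidableEq B]
    (f : (Fin a → ZMod 2) × (Fin t → ZMod 2) → B)
    (S : AddSubgroup ((Fin a → ZMod 2) × (Fin t → ZMod 2)))
    (hf : ∀ x y, f x = f y ↔ x + y ∈ S)
    (u v : Fin a → ZMod 2)
    (hG : ∀ z : B,
      (Finset.univ.filter fun w : Fin t → ZMod 2 => f (u, w) = z).card =
      (Finset.univ.filter fun w : Fin t → ZMod 2 => f (v, w) = z).card) :
    ∃ b : Fin t → ZMod 2, (u + v, b) ∈ S := by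
  obtain ⟨w, hw⟩ := exists_apply_eq_of_card_fiber_eq hG 0
  have hmem : (v, w) + (u, 0) ∈ S := (hf _ _).mp hw
  rw [Prod.mk_add_mk, add_zero, add_comm v] at hmem
  exact ⟨w, hmem⟩
end

section
/- Let f : (Z/2)^n → B satisfy f(x) = f(y) ⟺ x ⊕ y ∈ S for a subgroup S ≤ (Z/2)^n = (Z/2)^{n-t} × (Z/2)^t. Let e_1,…,e_k ∈ (Z/2)^{n-t} be a basis of S_l (the projection of S), and suppose v_1,…,v_k ∈ (Z/2)^t satisfy f(0, v_i) = f(e_i, 0) for each i. For γ ∈ {0,1}^k let V_γ = {v ∈ (Z/2)^t | f(0, Σ_i γ_i v_i) = f(0, v)}. Then S = ⋃_{γ ∈ {0,1}^k} {(Σ_i γ_i e_i, v) | v ∈ V_γ}. -/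
/-!
The relation `f (0, v i) = f (e i, 0)` says exactly that `(e i, v i) ∈ S`, so every
`(Σ γ_i e_i, Σ γ_i v_i)` lies in `S`. Given `p`, its first coordinate lies in `S_l`, hence
equals `Σ γ_i e_i` for some `γ`; translating `p` by the element of `S` with the same first
coordinate leaves `(0, Σ γ_i v_i + p.2)`, and membership of this in `S` is the condition
`f (0, Σ γ_i v_i) = f (0, p.2)`.
-/

section

variable {M N : Type*} [AddCommGroup M] [AddCommGroup N]

theorem AddSubgroup.mk_mem_of_apply_mk_eq {B : Type*} {f : M × N → B} {S : AddSubgroup (M × N)}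
    (hf : ∀ x y, f x = f y ↔ x + y ∈ S) {x : M} {y : N} (h : f (0, y) = f (x, 0)) :
    (x, y) ∈ S := by
  simpa using (hf _ _).mp h

variable [Module (ZMod 2) M]

theorem AddSubgroup.mem_iff_mk_zero_add_mem {S : AddSubgroup (M × N)} {p q : M × N}
    (hq : q ∈ S) (hpq : p.1 = q.1) : p ∈ S ↔ ((0 : M), q.2 + p.2) ∈ S := by
  rw [← S.add_mem_cancel_left hq]
  have hfst : q.1 + p.1 = 0 := by rw [hpq, ZModModule.add_self]
  rw [show q + p = (0, q.2 + p.2) from Prod.ext hfst rfl]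

theorem AddSubgroup.mk_sum_smul_mem {ι : Type*} [Fintype ι] [Module (ZMod 2) N]
    {S : AddSubgroup (M × N)} {e : ι → M} {v : ι → N}
    (hS : ∀ i, (e i, v i) ∈ S) (γ : ι → ZMod 2) :
    (∑ i, γ i • e i, ∑ i, γ i • v i) ∈ S := by
  have hsum : (∑ i, γ i • e i, ∑ i, γ i • v i) = ∑ i, γ i • (e i, v i) := by
    ext <;> simp [Prod.fst_sum, Prod.snd_sum]
  rw [hsum]
  exact S.sum_mem fun i _ => ZMod.smul_mem (hS i) (γ i)

end

theorem stmt11_general {a t k : ℕ} {B : Type*}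
    (f : (Fin a → ZMod 2) × (Fin t → ZMod 2) → B)
    (S : AddSubgroup ((Fin a → ZMod 2) × (Fin t → ZMod 2)))
    (hf : ∀ x y, f x = f y ↔ x + y ∈ S)
    (e : Fin k → (Fin a → ZMod 2))
    (he_span : ∀ x : Fin a → ZMod 2,
      (∃ b, (x, b) ∈ S) ↔ x ∈ Submodule.span (ZMod 2) (Set.range e))
    (v : Fin k → (Fin t → ZMod 2))
    (hv : ∀ i, f (0, v i) = f (e i, 0)) :
    ∀ p : (Fin a → ZMod 2) × (Fin t → ZMod 2),
      p ∈ S ↔ ∃ γ : Fin k → ZMod 2,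
        p.1 = ∑ i, γ i • e i ∧ f (0, ∑ i, γ i • v i) = f (0, p.2) := by
  have hcomb := AddSubgroup.mk_sum_smul_mem fun i => AddSubgroup.mk_mem_of_apply_mk_eq hf (hv i)
  intro p
  simp only [hf, Prod.mk_add_mk, add_zero]
  constructor
  · intro hp
    obtain ⟨γ, hγ⟩ := (Submodule.mem_span_range_iff_exists_fun (ZMod 2)).mp
      ((he_span p.1).mp ⟨p.2, hp⟩)
    exact ⟨γ, hγ.symm, (AddSubgroup.mem_iff_mk_zero_add_mem (hcomb γ) hγ.symm).mp hp⟩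
  · rintro ⟨γ, hγ, hmem⟩
    exact (AddSubgroup.mem_iff_mk_zero_add_mem (hcomb γ) hγ).mpr hmem

/-- Correctness of the reconstruction step (Algorithm 5): if `f` is hidden
by a subgroup `S`, `e 1, …, e k` is a basis of the projection `S_l`, and
`v i` satisfies `f(0, v i) = f(e i, 0)`, then `S` consists exactly of the
pairs `(Σ γ_i e_i, v)` with `f(0, Σ γ_i v_i) = f(0, v)`. -/
theorem stmt11 {a t k : ℕ} {B : Type*}
    (f : (Fin a → ZMod 2) × (Fin t → ZMod 2) → B)
    (S : AddSubgroup ((Fin a → ZMod 2) × (Fin t → ZMod 2)))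
    (hf : ∀ x y, f x = f y ↔ x + y ∈ S)
    (e : Fin k → (Fin a → ZMod 2))
    (he_indep : LinearIndependent (ZMod 2) e)
    (he_span : ∀ x : Fin a → ZMod 2,
      (∃ b, (x, b) ∈ S) ↔ x ∈ Submodule.span (ZMod 2) (Set.range e))
    (v : Fin k → (Fin t → ZMod 2))
    (hv : ∀ i, f (0, v i) = f (e i, 0)) :
    ∀ p : (Fin a → ZMod 2) × (Fin t → ZMod 2),
      p ∈ S ↔ ∃ γ : Fin k → ZMod 2,
        p.1 = ∑ i, γ i • e i ∧ f (0, ∑ i, γ i • v i) = f (0, p.2) :=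
  stmt11_general f S hf e he_span v hv
end

section
/- Under the hypotheses of the reconstruction lemma (f hidden by subgroup S, e_1,…,e_k a basis of S_l, f(0,v_i) = f(e_i,0)), for every γ ∈ {0,1}^k one has f(0, Σ_i γ_i v_i) = f(Σ_i γ_i e_i, 0); consequently (Σ_i γ_i e_i) ⊕ (Σ_i γ_i v_i) viewed as an element of (Z/2)^{n-t} × (Z/2)^t lies in S. -/
theorem apply_zero_mk_eq_apply_mk_zero_iff {M N B : Type*} [AddZeroClass M] [AddZeroClass N]
    {f : M × N → B} {S : Set (M × N)} (hf : ∀ x y, f x = f y ↔ x + y ∈ S) (x : M) (y : N) :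
    f (0, y) = f (x, 0) ↔ (x, y) ∈ S := by
  rw [hf, Prod.mk_add_mk, zero_add, add_zero]

theorem stmt12_general {a t k : ℕ} {B : Type*}
    (f : (Fin a → ZMod 2) × (Fin t → ZMod 2) → B)
    (S : AddSubgroup ((Fin a → ZMod 2) × (Fin t → ZMod 2)))
    (hf : ∀ x y, f x = f y ↔ x + y ∈ S)
    (e : Fin k → (Fin a → ZMod 2))
    (v : Fin k → (Fin t → ZMod 2))
    (hv : ∀ i, f (0, v i) = f (e i, 0)) :
    ∀ γ : Fin k → ZMod 2,
      f (0, ∑ i, γ i • v i) = f (∑ i, γ i • e i, 0) ∧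
      (∑ i, γ i • e i, ∑ i, γ i • v i) ∈ S := by
  intro γ
  have hpair : ∀ i, (e i, v i) ∈ S := fun i =>
    (apply_zero_mk_eq_apply_mk_zero_iff hf _ _).1 (hv i)
  have hmem : (∑ i, γ i • e i, ∑ i, γ i • v i) ∈ S := by
    rw [prod_mk_sum]
    refine S.sum_mem fun i _ => ?_
    simpa only [Prod.smul_mk] using ZMod.smul_mem (hpair i) (γ i)
  exact ⟨(apply_zero_mk_eq_apply_mk_zero_iff hf _ _).2 hmem, hmem⟩

/-- Under the hypotheses of the reconstruction lemma, for every
`γ ∈ {0,1}^k` one has `f(0, Σ γ_i v_i) = f(Σ γ_i e_i, 0)`, and consequently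
`(Σ γ_i e_i, Σ γ_i v_i) ∈ S`. -/
theorem stmt12 {a t k : ℕ} {B : Type*}
    (f : (Fin a → ZMod 2) × (Fin t → ZMod 2) → B)
    (S : AddSubgroup ((Fin a → ZMod 2) × (Fin t → ZMod 2)))
    (hf : ∀ x y, f x = f y ↔ x + y ∈ S)
    (e : Fin k → (Fin a → ZMod 2))
    (he_indep : LinearIndependent (ZMod 2) e)
    (he_span : ∀ x : Fin a → ZMod 2,
      (∃ b, (x, b) ∈ S) ↔ x ∈ Submodule.span (ZMod 2) (Set.range e))
    (v : Fin k → (Fin t → ZMod 2))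
    (hv : ∀ i, f (0, v i) = f (e i, 0)) :
    ∀ γ : Fin k → ZMod 2,
      f (0, ∑ i, γ i • v i) = f (∑ i, γ i • e i, 0) ∧
      (∑ i, γ i • e i, ∑ i, γ i • v i) ∈ S :=
  stmt12_general f S hf e v hv
end
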